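/- There exists α ∈ (0, 1/4) such that for all sufficiently large k, the number of binary strings (d_0, ..., d_{k−1}) ∈ {0,1}^k for which the number of indices 1 ≤ ℓ ≤ k−1 with (d_{ℓ−1}, d_ℓ) ∈ {(1,0), (0,1)} is at most α·k, is at most 2^{3k/4}. -/

import Mathlib

/-!
A `k`-bit number is determined by its lowest bit and the set of positions `1 ≤ ℓ < k` where its
bits change, so at most `2 · #{s ⊆ [1, k) | #s ≤ k/10}` numbers have at most `k/10` changes.
Chernoff's bound `#{s ⊆ t | #s ≤ m} ≤ 2 ^ m (3/2) ^ #t` and `3/2 ≤ 2 ^ (3/5)` then give at most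
`2 ^ (1 + k/10 + 3k/5) ≤ 2 ^ (3k/4)` such numbers once `k ≥ 20`.
-/

open Finset

def bitChanges (k D : ℕ) : Finset ℕ :=
  (Ico 1 k).filter fun ℓ => D.testBit (ℓ - 1) ≠ D.testBit ℓ

theorem eq_of_testBit_zero_eq_of_bitChanges_eq {k D D' : ℕ} (hD : D < 2 ^ k) (hD' : D' < 2 ^ k)
    (h₀ : D.testBit 0 = D'.testBit 0) (h : bitChanges k D = bitChanges k D') : D = D' := by
  refine Nat.eq_of_testBit_eq fun i => ?_
  induction i with
  | zero => exact h₀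
  | succ j ih =>
    by_cases hj : j + 1 < k
    · have hmem := Finset.ext_iff.mp h (j + 1)
      simp only [bitChanges, mem_filter, mem_Ico, Nat.add_sub_cancel, ih] at hmem
      have := hmem.trans (and_congr_right fun _ => ne_comm)
      revert this
      cases D.testBit (j + 1) <;> cases D'.testBit (j + 1) <;> cases D'.testBit j <;> simp [hj]
    · have hk : 2 ^ k ≤ 2 ^ (j + 1) := Nat.pow_le_pow_right two_pos (by omega)
      rw [Nat.testBit_eq_false_of_lt (hD.trans_le hk), Nat.testBit_eq_false_of_lt (hD'.trans_le hk)]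

theorem card_filter_bitChanges_card_le (k m : ℕ) :
    #{D ∈ range (2 ^ k) | #(bitChanges k D) ≤ m} ≤ 2 * #{s ∈ (Ico 1 k).powerset | #s ≤ m} := by
  calc #{D ∈ range (2 ^ k) | #(bitChanges k D) ≤ m}
      ≤ #((univ : Finset Bool) ×ˢ {s ∈ (Ico 1 k).powerset | #s ≤ m}) := by
        refine card_le_card_of_injOn (fun D => (D.testBit 0, bitChanges k D)) ?_ ?_
        · intro D hD
          simp only [mem_coe, mem_filter, mem_product, mem_univ, mem_powerset, true_and] at hD ⊢
          exact ⟨filter_subset _ _, hD.2⟩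
        · intro D hD D' hD' hDD'
          simp only [mem_coe, mem_filter, mem_range] at hD hD'
          exact eq_of_testBit_zero_eq_of_bitChanges_eq hD.1 hD'.1 (congrArg Prod.fst hDD')
            (congrArg Prod.snd hDD')
    _ = 2 * #{s ∈ (Ico 1 k).powerset | #s ≤ m} := by rw [card_product, card_univ, Fintype.card_bool]

-- Chernoff's trick: the weights `x ^ #s` of all subsets `s ⊆ t` sum to `(1 + x) ^ #t`.
theorem card_filter_powerset_card_le_mul_pow_le {α : Type*} (t : Finset α) (m : ℕ) {x : ℝ}
    (hx₀ : 0 ≤ x) (hx₁ : x ≤ 1) : #{s ∈ t.powerset | #s ≤ m} * x ^ m ≤ (1 + x) ^ #t := by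
  calc #{s ∈ t.powerset | #s ≤ m} * x ^ m
      = ∑ s ∈ t.powerset with #s ≤ m, x ^ m := by rw [sum_const, nsmul_eq_mul]
    _ ≤ ∑ s ∈ t.powerset with #s ≤ m, x ^ #s :=
        sum_le_sum fun s hs => pow_le_pow_of_le_one hx₀ hx₁ (mem_filter.mp hs).2
    _ ≤ ∑ s ∈ t.powerset, x ^ #s :=
        sum_le_sum_of_subset_of_nonneg (filter_subset _ _) fun _ _ _ => by positivity
    _ = (1 + x) ^ #t := by
        rw [add_comm, ← sum_pow_mul_eq_add_pow]
        simp only [one_pow, mul_one]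

theorem card_filter_powerset_card_le_le {α : Type*} (t : Finset α) (m : ℕ) :
    (#{s ∈ t.powerset | #s ≤ m} : ℝ) ≤ 2 ^ m * (3 / 2) ^ #t := by
  have h := card_filter_powerset_card_le_mul_pow_le t m (x := 1 / 2) (by norm_num) (by norm_num)
  rw [← le_div_iff₀ (by positivity)] at h
  refine h.trans_eq ?_
  rw [div_eq_mul_inv, ← inv_pow]
  norm_num [mul_comm]

theorem three_halves_pow_le (n : ℕ) : (3 / 2 : ℝ) ^ n ≤ 2 ^ (3 / 5 * (n : ℝ)) := by
  have h : (3 / 2 : ℝ) ≤ 2 ^ (3 / 5 : ℝ) := by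
    refine le_of_pow_le_pow_left₀ (n := 5) (by norm_num) (by positivity) ?_
    rw [← Real.rpow_natCast (2 ^ _), ← Real.rpow_mul zero_le_two]
    norm_num
  calc (3 / 2 : ℝ) ^ n ≤ (2 ^ (3 / 5 : ℝ)) ^ n := pow_le_pow_left₀ (by norm_num) h n
    _ = 2 ^ (3 / 5 * (n : ℝ)) := by rw [← Real.rpow_natCast, ← Real.rpow_mul zero_le_two]

theorem schmidt_few_digit_changes_rare :
    ∃ α : ℝ, 0 < α ∧ α < 1 / 4 ∧ ∃ k₀ : ℕ, ∀ k : ℕ, k₀ ≤ k →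
      (((Finset.range (2 ^ k)).filter (fun D =>
          ((((Finset.Ico 1 k).filter
              (fun ℓ => D.testBit (ℓ - 1) ≠ D.testBit ℓ)).card : ℝ)) ≤ α * k)).card : ℝ)
        ≤ (2 : ℝ) ^ ((3 * (k : ℝ)) / 4) := by
  refine ⟨1 / 10, by norm_num, by norm_num, 20, fun k hk => ?_⟩
  set m := ⌊(1 / 10 : ℝ) * k⌋₊
  have hm : (m : ℝ) ≤ 1 / 10 * k := Nat.floor_le (by positivity)
  have hk20 : (20 : ℝ) ≤ k := by exact_mod_cast hk
  have hcount : #{D ∈ range (2 ^ k) | (#(bitChanges k D) : ℝ) ≤ 1 / 10 * k}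
      ≤ 2 * #{s ∈ (Ico 1 k).powerset | #s ≤ m} :=
    (card_le_card (monotone_filter_right _ fun _ _ h => Nat.le_floor h)).trans
      (card_filter_bitChanges_card_le k m)
  calc _ ≤ (2 * #{s ∈ (Ico 1 k).powerset | #s ≤ m} : ℝ) := by exact_mod_cast hcount
    _ ≤ 2 * (2 ^ m * (3 / 2) ^ (k - 1)) := by
        gcongr
        simpa using card_filter_powerset_card_le_le (Ico 1 k) m
    _ ≤ 2 * (2 ^ (m : ℝ) * 2 ^ (3 / 5 * (k : ℝ))) := by
        rw [Real.rpow_natCast]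
        gcongr
        exact (pow_le_pow_right₀ (by norm_num) (Nat.sub_le k 1)).trans (three_halves_pow_le k)
    _ = 2 ^ (1 + m + 3 / 5 * (k : ℝ)) := by
        rw [Real.rpow_add two_pos, Real.rpow_add two_pos, Real.rpow_one]; ring
    _ ≤ 2 ^ (3 * (k : ℝ) / 4) := Real.rpow_le_rpow_of_exponent_le one_le_two (by linarith)
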